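/- For even k ≥ 4, applying successively the specializations S(k/2 − 1, 0, k/2, 1), then S(0, 1, 0, k/2), then S(0, k/2, 0, k/2) to the data (3k; k(k+5)/2 + 1, k²/2) with sub-star (k+1, k/2), using the residuation rule (d;L,C,(A,B)) ↦ (d−1; L−ℓ+h−2s, C−c+s−h, (ℓ+2c+h, c)), yields exactly (3(k−1); (k−1)(k+4)/2 + 2, ((k−1)²−1)/2) with sub-star (k, k/2). -/

import Mathlib

/-- The data `(d; L, C, (A, B))` of a scheme `B(d; L, C, (A,B))`. -/
def SpecData : Type := ℤ × ℤ × ℤ × ℤ × ℤ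

/-- The residual of the specialization `S(ℓ,s,h,c)` applied to `(d; L, C, (A,B))` is
`(d−1; L−ℓ+h−2s, C−c+s−h, (ℓ+2c+h, c))`. -/
def specResidual (ℓ s h c : ℤ) : SpecData → SpecData :=
  fun x => (x.1 - 1, x.2.1 - ℓ + h - 2 * s, x.2.2.1 - c + s - h, ℓ + 2 * c + h, c)

theorem stmt7_general (k : ℤ) (hk : Even k) :
    specResidual 0 (k / 2) 0 (k / 2)
      (specResidual 0 1 0 (k / 2)
        (specResidual (k / 2 - 1) 0 (k / 2) 1
          ((3 * k, k * (k + 5) / 2 + 1, k ^ 2 / 2, k + 1, k / 2) : SpecData)))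
      = ((3 * (k - 1), (k - 1) * (k + 4) / 2 + 2, ((k - 1) ^ 2 - 1) / 2, k, k / 2) :
          SpecData) := by
  obtain ⟨m, rfl⟩ := hk
  have exact_half {a : ℤ} (b : ℤ) (h : a = 2 * b) : a / 2 = b :=
    Int.ediv_eq_of_eq_mul_right two_ne_zero h
  rw [exact_half m (by ring), exact_half (m * (2 * m + 5)) (by ring),
    exact_half (2 * m ^ 2) (by ring), exact_half ((2 * m - 1) * (m + 2)) (by ring),
    exact_half (2 * m ^ 2 - 2 * m) (by ring)]
  simp only [specResidual]
  refine Prod.ext ?_ (Prod.ext ?_ (Prod.ext ?_ (Prod.ext ?_ rfl))) <;> ring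

/-- Reduction Lemma, even case: for even `k ≥ 4`, applying `S(k/2 − 1, 0, k/2, 1)`,
then `S(0, 1, 0, k/2)`, then `S(0, k/2, 0, k/2)` to
`(3k; k(k+5)/2 + 1, k²/2, (k+1, k/2))` yields
`(3(k−1); (k−1)(k+4)/2 + 2, ((k−1)²−1)/2, (k, k/2))`. -/
theorem stmt7 (k : ℤ) (hk : Even k) (hk4 : 4 ≤ k) :
    specResidual 0 (k / 2) 0 (k / 2)
      (specResidual 0 1 0 (k / 2)
        (specResidual (k / 2 - 1) 0 (k / 2) 1
          ((3 * k, k * (k + 5) / 2 + 1, k ^ 2 / 2, k + 1, k / 2) : SpecData)))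
      = ((3 * (k - 1), (k - 1) * (k + 4) / 2 + 2, ((k - 1) ^ 2 - 1) / 2, k, k / 2) :
          SpecData) :=
  stmt7_general k hk
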